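/- Suppose a sequence of costs m₁,…,m_T ∈ [0,1] has total sum M = Σᵢ mᵢ. Call a day t ∈ [T] 'bad' if there exists e with t ≤ e ≤ T such that Σᵢ₌ₜᵉ mᵢ ≥ (e − t + 1)·L, where L = δ/8 for some δ ∈ (0,1]. Then the number of bad days is at most 8M/δ. -/
import Mathlib

open scoped Classical

lemma bad_aux (T : ℕ) (m : ℕ → ℝ) (hm : ∀ i, 0 ≤ m i) (L : ℝ) (hL : 0 < L) :
    ∀ n a, T + 1 - a ≤ n →
      (((Finset.Icc a T).filter (fun t => ∃ e, t ≤ e ∧ e ≤ T ∧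
          ((e : ℝ) - t + 1) * L ≤ ∑ i ∈ Finset.Icc t e, m i)).card : ℝ) * L
        ≤ ∑ i ∈ Finset.Icc a T, m i := by
  intro n
  induction n with
  | zero =>
    intro a ha
    have : T < a := by omega
    rw [Finset.Icc_eq_empty_of_lt this]
    simp
  | succ n ih =>
    intro a ha
    set P : ℕ → Prop := fun t => ∃ e, t ≤ e ∧ e ≤ T ∧
        ((e : ℝ) - t + 1) * L ≤ ∑ i ∈ Finset.Icc t e, m i with hP
    by_cases hne : ((Finset.Icc a T).filter P).Nonempty
    · obtain ⟨t, ht⟩ := Finset.exists_min_image _ id hne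
      obtain ⟨htmem, htmin⟩ := ht
      rw [Finset.mem_filter, Finset.mem_Icc] at htmem
      obtain ⟨⟨hat, htT⟩, e, hte, heT, hsum⟩ := htmem
      -- filter set ⊆ Icc t e ∪ filter over Icc (e+1) T
      have hsub : (Finset.Icc a T).filter P ⊆
          Finset.Icc t e ∪ (Finset.Icc (e+1) T).filter P := by
        intro s hs
        have hsP := (Finset.mem_filter.mp hs).2
        have hsmem := Finset.mem_Icc.mp (Finset.mem_filter.mp hs).1
        have hts : t ≤ s := htmin s hs
        rcases le_or_gt s e with h | h
        · exact Finset.mem_union_left _ (Finset.mem_Icc.mpr ⟨hts, h⟩)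
        · exact Finset.mem_union_right _ (Finset.mem_filter.mpr
            ⟨Finset.mem_Icc.mpr ⟨h, hsmem.2⟩, hsP⟩)
      have hcard : ((Finset.Icc a T).filter P).card ≤
          (e + 1 - t) + ((Finset.Icc (e+1) T).filter P).card := by
        calc ((Finset.Icc a T).filter P).card
            ≤ (Finset.Icc t e ∪ (Finset.Icc (e+1) T).filter P).card :=
              Finset.card_le_card hsub
          _ ≤ (Finset.Icc t e).card + ((Finset.Icc (e+1) T).filter P).card :=
              Finset.card_union_le _ _
          _ = (e + 1 - t) + ((Finset.Icc (e+1) T).filter P).card := by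
              rw [Nat.card_Icc]
      have hih : (((Finset.Icc (e+1) T).filter P).card : ℝ) * L
          ≤ ∑ i ∈ Finset.Icc (e+1) T, m i := ih (e+1) (by omega)
      have hcardR : (((Finset.Icc a T).filter P).card : ℝ) * L ≤
          (((e:ℝ) - t + 1) + (((Finset.Icc (e+1) T).filter P).card : ℝ)) * L := by
        apply mul_le_mul_of_nonneg_right _ hL.le
        have := hcard
        have h1 : ((e + 1 - t : ℕ) : ℝ) = (e:ℝ) - t + 1 := by
          have : t ≤ e + 1 := by omega
          push_cast [Nat.cast_sub this]
          ring
        calc (((Finset.Icc a T).filter P).card : ℝ)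
            ≤ (((e + 1 - t) + ((Finset.Icc (e+1) T).filter P).card : ℕ) : ℝ) := by
              exact_mod_cast hcard
          _ = ((e:ℝ) - t + 1) + (((Finset.Icc (e+1) T).filter P).card : ℝ) := by
              push_cast [h1]; ring
      have hsplit : ∑ i ∈ Finset.Icc t e, m i + ∑ i ∈ Finset.Icc (e+1) T, m i
          = ∑ i ∈ Finset.Icc t T, m i := by
        rw [← Finset.sum_union]
        · congr 1
          ext x
          simp only [Finset.mem_union, Finset.mem_Icc]
          omega
        · rw [Finset.disjoint_left]
          intro x hx hx'
          rw [Finset.mem_Icc] at hx hx'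
          omega
      have hmono : ∑ i ∈ Finset.Icc t T, m i ≤ ∑ i ∈ Finset.Icc a T, m i :=
        Finset.sum_le_sum_of_subset_of_nonneg
          (Finset.Icc_subset_Icc_left hat) (fun i _ _ => hm i)
      calc (((Finset.Icc a T).filter P).card : ℝ) * L
          ≤ (((e:ℝ) - t + 1) + (((Finset.Icc (e+1) T).filter P).card : ℝ)) * L := hcardR
        _ = ((e:ℝ) - t + 1) * L + (((Finset.Icc (e+1) T).filter P).card : ℝ) * L := by ring
        _ ≤ ∑ i ∈ Finset.Icc t e, m i + ∑ i ∈ Finset.Icc (e+1) T, m i :=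
            add_le_add hsum hih
        _ = ∑ i ∈ Finset.Icc t T, m i := hsplit
        _ ≤ ∑ i ∈ Finset.Icc a T, m i := hmono
    · rw [Finset.not_nonempty_iff_eq_empty] at hne
      rw [hne]
      simp only [Finset.card_empty, Nat.cast_zero, zero_mul]
      exact Finset.sum_nonneg fun i _ => hm i

/-- If the costs m₁,…,m_T ∈ [0,1] sum to M, then the number of 'bad' days — days t such that
some interval [t,e] ⊆ [T] has average cost at least L = δ/8 — is at most 8M/δ. -/
theorem bad_days_bound (T : ℕ) (m : ℕ → ℝ) (hm : ∀ i, m i ∈ Set.Icc (0 : ℝ) 1)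
    (δ : ℝ) (hδ0 : 0 < δ) (hδ1 : δ ≤ 1) :
    (((Finset.Icc 1 T).filter (fun t => ∃ e, t ≤ e ∧ e ≤ T ∧
        ((e : ℝ) - t + 1) * (δ / 8) ≤ ∑ i ∈ Finset.Icc t e, m i)).card : ℝ)
      ≤ 8 * (∑ i ∈ Finset.Icc 1 T, m i) / δ := by
  have hL : (0:ℝ) < δ / 8 := by linarith
  have := bad_aux T m (fun i => (hm i).1) (δ/8) hL (T+1) 1 (by omega)
  rw [le_div_iff₀ hδ0]
  nlinarith [this]
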